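/- Creation-operator formula via Hermite polynomials: let Φ₀(x,t) = (πħ)^{−1/4}(Ω/μ)^{1/4} exp(−((iρ+Ω)/(2ħμ))x²)·exp(−(i/2)Ωt − (i/(2ħ))κ̃cC₅t), and let â⁺(t) act on differentiable functions f of x by (â⁺(t)f)(x) = (2ħ)^{−1/2}[conj(C(t))·(−iħ∂ₓf(x)) − conj(B(t))·x·f(x)], where B(t) = e^{iΩt}(−ρ+iΩ)/√(Ωμ), C(t) = e^{iΩt}√(μ/Ω). Then for every ν ∈ ℕ and all (x,t): ([â⁺(t)]^ν Φ₀)(x,t) = i^ν·2^{−ν/2}·H_ν(√(Ω/(ħμ))·x)·Φ₀(x,t)·e^{−iΩνt}. -/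

import Mathlib

/-!
Write `α = √(Ω/(ħμ))`. Since `∂ₓΦ₀ = -((iρ + Ω)/(ħμ)) x Φ₀`, conjugating by the Gaussian turns the
creation operator into a first-order operator on the prefactor:
`â⁺(u Φ₀) = (i/√2) e^{-iΩt} (2αx u - α⁻¹ u') Φ₀`; the `ρ`-part of `conj B` exactly cancels the
imaginary part of the Gaussian exponent. With `u(x) = H_ν(αx)` the bracket is `H_{ν+1}(αx)` by the
Hermite recursion, and the theorem follows by induction on `ν`.
-/

noncomputable section

/-- Physicists' Hermite polynomials: `H₀ = 1`, `H_{ν+1}(ζ) = 2ζH_ν(ζ) − H_ν′(ζ)`. -/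
def hermiteH : ℕ → ℝ → ℝ
  | 0 => fun _ => 1
  | ν + 1 => fun ζ => 2 * ζ * hermiteH ν ζ - deriv (hermiteH ν) ζ

/-- The Gaussian ground state `Φ₀`. -/
def Phi0 (hbar μ ρ c κt C₅ Ω : ℝ) (x t : ℝ) : ℂ :=
  (((Real.pi * hbar) ^ (-(1 / 4 : ℝ)) * (Ω / μ) ^ ((1 / 4 : ℝ)) : ℝ) : ℂ) *
    Complex.exp (-((Complex.I * (ρ : ℂ) + (Ω : ℂ)) / ((2 * hbar * μ : ℝ) : ℂ)) *
      (x : ℂ) ^ 2) *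
    Complex.exp (-(Complex.I / 2) * (Ω : ℂ) * (t : ℂ)
      - (Complex.I / ((2 * hbar : ℝ) : ℂ)) * ((κt * c * C₅ : ℝ) : ℂ) * (t : ℂ))

/-- `B(t) = e^{iΩt}(−ρ+iΩ)/√(Ωμ)`. -/
def Bfun (μ ρ Ω : ℝ) (t : ℝ) : ℂ :=
  Complex.exp (Complex.I * (Ω : ℂ) * (t : ℂ)) *
    ((-(ρ : ℂ) + Complex.I * (Ω : ℂ)) / (Real.sqrt (Ω * μ) : ℂ))

/-- `C(t) = e^{iΩt}√(μ/Ω)`. -/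
def Cfun (μ Ω : ℝ) (t : ℝ) : ℂ :=
  Complex.exp (Complex.I * (Ω : ℂ) * (t : ℂ)) * (Real.sqrt (μ / Ω) : ℂ)

/-- The creation operator
`(â⁺(t)f)(x) = (2ħ)^{−1/2}[conj(C(t))·(−iħ∂ₓf(x)) − conj(B(t))·x·f(x)]`. -/
def adOp (hbar μ ρ Ω : ℝ) (t : ℝ) (f : ℝ → ℂ) (x : ℝ) : ℂ :=
  ((Real.sqrt (2 * hbar) : ℝ) : ℂ)⁻¹ *
    ((starRingEnd ℂ) (Cfun μ Ω t) * (-Complex.I * (hbar : ℂ) * deriv f x)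
      - (starRingEnd ℂ) (Bfun μ ρ Ω t) * (x : ℂ) * f x)

theorem contDiff_hermiteH (ν : ℕ) : ContDiff ℝ ⊤ (hermiteH ν) := by
  induction ν with
  | zero => exact contDiff_const
  | succ n ih => exact ((contDiff_const.mul contDiff_id).mul ih).sub ih.deriv'

theorem hasDerivAt_Phi0 (hbar μ ρ c κt C₅ Ω t y : ℝ) :
    HasDerivAt (fun y => Phi0 hbar μ ρ c κt C₅ Ω y t)
      (-((Complex.I * ρ + Ω) / (hbar * μ)) * y * Phi0 hbar μ ρ c κt C₅ Ω y t) y := by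
  have hsq : HasDerivAt (fun y : ℝ => (y : ℂ) ^ 2) (2 * y) y := by
    simpa using (hasDerivAt_pow 2 (y : ℂ)).comp_ofReal
  unfold Phi0
  refine (((hsq.const_mul _).cexp.const_mul _).mul_const _).congr_deriv ?_
  push_cast
  ring

theorem conj_Cfun (μ Ω t : ℝ) :
    starRingEnd ℂ (Cfun μ Ω t) = Complex.exp (-(Complex.I * Ω * t)) * Real.sqrt (μ / Ω) := by
  simp [Cfun, ← Complex.exp_conj]

theorem conj_Bfun (μ ρ Ω t : ℝ) :
    starRingEnd ℂ (Bfun μ ρ Ω t) =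
      Complex.exp (-(Complex.I * Ω * t)) * ((-ρ - Complex.I * Ω) / Real.sqrt (Ω * μ)) := by
  simp [Bfun, ← Complex.exp_conj]
  ring

theorem adOp_mul_Phi0 {hbar μ Ω : ℝ} (hħ : 0 < hbar) (hμ : 0 < μ) (hΩ : 0 < Ω)
    (ρ c κt C₅ t x : ℝ) {u : ℝ → ℂ} {u' : ℂ} (hu : HasDerivAt u u' x) :
    adOp hbar μ ρ Ω t (fun y => u y * Phi0 hbar μ ρ c κt C₅ Ω y t) x =
      Complex.I * ((Real.sqrt 2)⁻¹ : ℝ) *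
        (2 * Real.sqrt (Ω / (hbar * μ)) * x * u x - u' / Real.sqrt (Ω / (hbar * μ))) *
        Phi0 hbar μ ρ c κt C₅ Ω x t * Complex.exp (-(Complex.I * Ω * t)) := by
  rw [adOp, (hu.fun_mul (hasDerivAt_Phi0 hbar μ ρ c κt C₅ Ω t x)).deriv, conj_Cfun, conj_Bfun,
    Real.sqrt_div hΩ.le, Real.sqrt_div hμ.le, Real.sqrt_mul hħ.le, Real.sqrt_mul hΩ.le,
    Real.sqrt_mul zero_le_two]
  generalize Phi0 hbar μ ρ c κt C₅ Ω x t = Φ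
  generalize Complex.exp (-(Complex.I * Ω * t)) = E
  have hs : (Real.sqrt Ω : ℂ) ≠ 0 := by exact_mod_cast (Real.sqrt_pos.2 hΩ).ne'
  have hm : (Real.sqrt μ : ℂ) ≠ 0 := by exact_mod_cast (Real.sqrt_pos.2 hμ).ne'
  have hh : (Real.sqrt hbar : ℂ) ≠ 0 := by exact_mod_cast (Real.sqrt_pos.2 hħ).ne'
  have h2 : (Real.sqrt 2 : ℂ) ≠ 0 := by exact_mod_cast (Real.sqrt_pos.2 zero_lt_two).ne'
  have hΩ_sq : (Ω : ℂ) = (Real.sqrt Ω : ℂ) ^ 2 := by norm_cast; rw [Real.sq_sqrt hΩ.le]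
  have hμ_sq : (μ : ℂ) = (Real.sqrt μ : ℂ) ^ 2 := by norm_cast; rw [Real.sq_sqrt hμ.le]
  have hħ_sq : (hbar : ℂ) = (Real.sqrt hbar : ℂ) ^ 2 := by norm_cast; rw [Real.sq_sqrt hħ.le]
  push_cast
  -- In the square roots `√Ω, √μ, √ħ, √2` the identity becomes rational.
  rw [hΩ_sq, hμ_sq, hħ_sq]
  field_simp
  linear_combination E * Φ * u x * ρ * x * Complex.I_sq

theorem adOp_hermiteH_mul_Phi0 {hbar μ Ω : ℝ} (hħ : 0 < hbar) (hμ : 0 < μ) (hΩ : 0 < Ω)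
    (ρ c κt C₅ t x : ℝ) (K : ℂ) (ν : ℕ) :
    adOp hbar μ ρ Ω t
        (fun y => K * hermiteH ν (Real.sqrt (Ω / (hbar * μ)) * y) * Phi0 hbar μ ρ c κt C₅ Ω y t) x =
      Complex.I * ((Real.sqrt 2)⁻¹ : ℝ) * K * hermiteH (ν + 1) (Real.sqrt (Ω / (hbar * μ)) * x) *
        Phi0 hbar μ ρ c κt C₅ Ω x t * Complex.exp (-(Complex.I * Ω * t)) := by
  set α := Real.sqrt (Ω / (hbar * μ)) with hα_def
  have hα : (α : ℂ) ≠ 0 := by exact_mod_cast (Real.sqrt_pos.2 (by positivity)).ne'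
  have hH : HasDerivAt (fun y => K * hermiteH ν (α * y))
      (K * (deriv (hermiteH ν) (α * x) * α : ℝ)) x :=
    ((((contDiff_hermiteH ν).differentiable (by simp)).differentiableAt.hasDerivAt.comp x
      ((hasDerivAt_id x).const_mul α)).ofReal_comp.const_mul K).congr_deriv (by simp)
  rw [adOp_mul_Phi0 hħ hμ hΩ ρ c κt C₅ t x hH, ← hα_def, hermiteH]
  push_cast
  field_simp

theorem adOp_iterate_Phi0 {hbar μ Ω : ℝ} (hħ : 0 < hbar) (hμ : 0 < μ) (hΩ : 0 < Ω)
    (ρ c κt C₅ t : ℝ) (ν : ℕ) :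
    (adOp hbar μ ρ Ω t)^[ν] (fun y => Phi0 hbar μ ρ c κt C₅ Ω y t) =
      fun y => Complex.I ^ ν * (((Real.sqrt 2)⁻¹ : ℝ) : ℂ) ^ ν *
        Complex.exp (-Complex.I * Ω * ν * t) * hermiteH ν (Real.sqrt (Ω / (hbar * μ)) * y) *
        Phi0 hbar μ ρ c κt C₅ Ω y t := by
  induction ν with
  | zero => funext y; simp [hermiteH]
  | succ n ih =>
    have hexp : Complex.exp (-Complex.I * Ω * (n + 1 : ℕ) * t) =
        Complex.exp (-Complex.I * Ω * n * t) * Complex.exp (-(Complex.I * Ω * t)) := by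
      rw [← Complex.exp_add]
      push_cast
      ring_nf
    funext y
    rw [Function.iterate_succ_apply', ih, adOp_hermiteH_mul_Phi0 hħ hμ hΩ, hexp]
    ring

/-- Creation-operator formula via Hermite polynomials:
`[â⁺(t)]^ν Φ₀ = i^ν·2^{−ν/2}·H_ν(√(Ω/(ħμ))x)·Φ₀·e^{−iΩνt}`. -/
theorem creation_operator_hermite_formula
    (hbar μ ρ c κt C₅ σt Ω : ℝ) (h_hbar : 0 < hbar) (hμ : 0 < μ)
    (hpos : 0 < σt * μ - ρ ^ 2) (hΩ : Ω = Real.sqrt (σt * μ - ρ ^ 2)) :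
    ∀ ν : ℕ, ∀ x t : ℝ,
      (adOp hbar μ ρ Ω t)^[ν] (fun y => Phi0 hbar μ ρ c κt C₅ Ω y t) x
        = Complex.I ^ ν * (((Real.sqrt 2)⁻¹ : ℝ) : ℂ) ^ ν *
            ((hermiteH ν (Real.sqrt (Ω / (hbar * μ)) * x) : ℝ) : ℂ) *
            Phi0 hbar μ ρ c κt C₅ Ω x t *
            Complex.exp (-Complex.I * (Ω : ℂ) * (ν : ℂ) * (t : ℂ)) := by
  intro ν x t
  have hΩ_pos : 0 < Ω := hΩ ▸ Real.sqrt_pos.2 hpos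
  rw [adOp_iterate_Phi0 h_hbar hμ hΩ_pos]
  ring

end
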